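/- arXiv:1008.3052 — 3 statements merged into one kernel-verified Lean document; each statement's English description precedes it below -/
import Mathlib

section
/- Let d ≥ 1 and K ≥ 1, let U_i : ℝ → ℝ (i = 1,…,K) be continuously differentiable functions, and define the Maxwellian M : (ℝ^d)^K → (0,∞) by M(q) = exp(−∑_{i=1}^K U_i(|q_i|²/2)) for q = (q₁,…,q_K). Let B be a real d×d matrix with trace zero, and let φ : (ℝ^d)^K → ℝ be continuously differentiable with compact support. Then ∫_{(ℝ^d)^K} M(q) ∑_{i=1}^K ⟨B q_i, ∇_{q_i} φ(q)⟩ dq = ∫_{(ℝ^d)^K} M(q) φ(q) ∑_{i=1}^K U_i′(|q_i|²/2) ⟨q_i, B q_i⟩ dq. -/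
/-!
The vector field `V(q) = (B q₁, …, B q_K)` is linear with trace `K · tr B = 0`, so it is
divergence free and `div (g V) = ⟨∇g, V⟩` for every `C¹` function `g`. Integrating by parts
against the compactly supported `φ` gives `∫ g ⟨V, ∇φ⟩ = -∫ ⟨∇g, V⟩ φ`, and for the Maxwellian
`g = M` one has `∇_{qᵢ} M = -M Uᵢ'(|qᵢ|²/2) qᵢ`.
-/

open MeasureTheory

theorem LinearMap.trace_eq_sum_repr_apply {R M ι : Type*} [CommSemiring R] [AddCommMonoid M]
    [Module R M] [Fintype ι] [DecidableEq ι] (b : Module.Basis ι R M) (A : M →ₗ[R] M) :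
    LinearMap.trace R M A = ∑ m, b.repr (A (b m)) m := by
  simp [LinearMap.trace_eq_matrix_trace R b, Matrix.trace, LinearMap.toMatrix_apply]

theorem LinearMap.trace_piMap {R ι M : Type*} [CommRing R] [Fintype ι] [DecidableEq ι]
    [AddCommGroup M] [Module R M] [Module.Free R M] [Module.Finite R M] (f : ι → M →ₗ[R] M) :
    LinearMap.trace R (ι → M) (LinearMap.piMap f) = ∑ i, LinearMap.trace R M (f i) := by
  have hsum : LinearMap.piMap f =
      ∑ i, LinearMap.single R (fun _ => M) i ∘ₗ f i ∘ₗ LinearMap.proj i := by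
    ext x j
    simp
  rw [hsum, map_sum]
  refine Finset.sum_congr rfl fun i _ => ?_
  rw [LinearMap.trace_comp_comm', LinearMap.comp_assoc, LinearMap.proj_comp_single_same,
    LinearMap.comp_id]

section LinearVectorField

variable {E : Type*} [NormedAddCommGroup E] [NormedSpace ℝ E] [FiniteDimensional ℝ E]

/-- `div (g A) = ⟨∇g, A⟩ + g · tr A`, written in the coordinates of a basis `b`. -/
theorem sum_fderiv_mul_basis_repr_apply {ι : Type*} [Fintype ι] [DecidableEq ι]
    (b : Module.Basis ι ℝ E) (A : E →ₗ[ℝ] E) {g : E → ℝ} {x : E}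
    (hg : DifferentiableAt ℝ g x) :
    ∑ m, fderiv ℝ (fun y => g y * b.repr (A y) m) x (b m) =
      fderiv ℝ g x (A x) + g x * LinearMap.trace ℝ E A := by
  have hℓ (m : ι) : HasFDerivAt (fun y => b.repr (A y) m)
      (LinearMap.toContinuousLinearMap (b.coord m ∘ₗ A)) x :=
    (LinearMap.toContinuousLinearMap (b.coord m ∘ₗ A)).hasFDerivAt
  have hAx : fderiv ℝ g x (A x) = ∑ m, b.repr (A x) m * fderiv ℝ g x (b m) := by
    conv_lhs => rw [← b.sum_repr (A x)]
    simp only [map_sum, map_smul, smul_eq_mul]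
  simp only [fderiv_fun_mul hg (hℓ _).differentiableAt, (hℓ _).fderiv,
    LinearMap.trace_eq_sum_repr_apply b, hAx, Finset.mul_sum, ← Finset.sum_add_distrib]
  refine Finset.sum_congr rfl fun m _ => ?_
  simp only [add_apply, smul_apply,
    LinearMap.coe_toContinuousLinearMap', LinearMap.coe_comp, Function.comp_apply,
    Module.Basis.coord_apply, smul_eq_mul]
  ring

variable [MeasurableSpace E] [BorelSpace E] {μ : Measure E} [μ.IsAddHaarMeasure]

theorem integral_mul_fderiv_apply_linear_eq_neg {A : E →ₗ[ℝ] E}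
    (hA : LinearMap.trace ℝ E A = 0) {g φ : E → ℝ} (hg : ContDiff ℝ 1 g) (hφ : ContDiff ℝ 1 φ)
    (hφc : HasCompactSupport φ) :
    ∫ x, g x * fderiv ℝ φ x (A x) ∂μ = -∫ x, fderiv ℝ g x (A x) * φ x ∂μ := by
  classical
  let b := Module.finBasis ℝ E
  have hgℓ (m) : ContDiff ℝ 1 fun x => g x * b.repr (A x) m :=
    hg.mul (LinearMap.toContinuousLinearMap (b.coord m ∘ₗ A)).contDiff
  have hDgℓ (m) (v : E) : Continuous fun x => fderiv ℝ (fun y => g y * b.repr (A y) m) x v :=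
    ((hgℓ m).continuous_fderiv one_ne_zero).clm_apply continuous_const
  have hmulφ {f : E → ℝ} (hf : Continuous f) : Integrable (fun x => f x * φ x) μ :=
    (hf.mul hφ.continuous).integrable_of_hasCompactSupport hφc.mul_left
  have hmulDφ {f : E → ℝ} (hf : Continuous f) (v : E) :
      Integrable (fun x => f x * fderiv ℝ φ x v) μ :=
    Continuous.integrable_of_hasCompactSupport
      (hf.mul ((hφ.continuous_fderiv one_ne_zero).clm_apply continuous_const))
      (hφc.fderiv_apply (𝕜 := ℝ) v).mul_left
  calc ∫ x, g x * fderiv ℝ φ x (A x) ∂μ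
      = ∫ x, ∑ m, g x * b.repr (A x) m * fderiv ℝ φ x (b m) ∂μ := by
        congr 1 with x
        conv_lhs => rw [← b.sum_repr (A x)]
        simp only [map_sum, map_smul, smul_eq_mul, Finset.mul_sum, mul_assoc]
    _ = ∑ m, ∫ x, g x * b.repr (A x) m * fderiv ℝ φ x (b m) ∂μ :=
        integral_finsetSum _ fun m _ => hmulDφ (hgℓ m).continuous (b m)
    _ = ∑ m, -∫ x, fderiv ℝ (fun y => g y * b.repr (A y) m) x (b m) * φ x ∂μ :=
        Finset.sum_congr rfl fun m _ =>
          integral_mul_fderiv_eq_neg_fderiv_mul_of_integrable (hmulφ (hDgℓ m (b m)))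
            (hmulDφ (hgℓ m).continuous (b m)) (hmulφ (hgℓ m).continuous)
            (fun x _ => (hgℓ m).differentiable one_ne_zero x)
            (fun x _ => hφ.differentiable one_ne_zero x)
    _ = -∫ x, fderiv ℝ g x (A x) * φ x ∂μ := by
        rw [Finset.sum_neg_distrib, ← integral_finsetSum _ fun m _ => hmulφ (hDgℓ m (b m))]
        simp_rw [← Finset.sum_mul, sum_fderiv_mul_basis_repr_apply b A
          (hg.differentiable one_ne_zero _), hA, mul_zero, add_zero]

end LinearVectorField

section Maxwellian

variable {ι κ : Type*} [Fintype ι] [Fintype κ]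

noncomputable def maxwellian (U : ι → ℝ → ℝ) (q : ι → κ → ℝ) : ℝ :=
  Real.exp (-∑ i, U i ((∑ j, q i j ^ 2) / 2))

theorem contDiff_maxwellian {U : ι → ℝ → ℝ} {n : WithTop ℕ∞} (hU : ∀ i, ContDiff ℝ n (U i)) :
    ContDiff ℝ n (maxwellian (κ := κ) U) := by
  unfold maxwellian
  fun_prop

theorem fderiv_maxwellian_apply {U : ι → ℝ → ℝ} (hU : ∀ i, Differentiable ℝ (U i))
    (q v : ι → κ → ℝ) :
    fderiv ℝ (maxwellian U) q v =
      -maxwellian U q * ∑ i, deriv (U i) ((∑ j, q i j ^ 2) / 2) * ∑ j, q i j * v i j := by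
  unfold maxwellian
  simp only [div_eq_mul_inv]
  have hcoord (i : ι) (j : κ) :=
    (hasFDerivAt_apply (𝕜 := ℝ) j (q i)).comp q (hasFDerivAt_apply (𝕜 := ℝ) i q)
  have hsq (i : ι) : HasFDerivAt (fun q : ι → κ → ℝ => (∑ j, q i j ^ 2) * 2⁻¹) _ q :=
    (HasFDerivAt.fun_sum (u := Finset.univ) fun j _ => (hcoord i j).pow 2).mul_const 2⁻¹
  have h := (Real.hasDerivAt_exp _).comp_hasFDerivAt q (HasFDerivAt.fun_sum (u := Finset.univ)
    fun i _ => (hU i _).hasDerivAt.comp_hasFDerivAt q (hsq i)).neg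
  simp only [Function.comp_def, Pi.neg_def] at h
  rw [h.fderiv]
  simp only [Finset.sum_mul, Nat.add_one_sub_one, pow_one, nsmul_eq_mul, Nat.cast_ofNat, smul_neg,
    neg_apply, smul_apply, sum_apply,
    ContinuousLinearMap.comp_apply, ContinuousLinearMap.proj_apply, smul_eq_mul, Finset.mul_sum,
    neg_mul, Finset.sum_neg_distrib, neg_inj]
  exact Finset.sum_congr rfl fun i _ => Finset.sum_congr rfl fun j _ => by ring

end Maxwellian

theorem maxwellian_integration_by_parts_general (d K : ℕ)
    (U : Fin K → ℝ → ℝ) (hU : ∀ i, ContDiff ℝ 1 (U i))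
    (M : (Fin K → Fin d → ℝ) → ℝ)
    (hM : ∀ q : Fin K → Fin d → ℝ,
      M q = Real.exp (-∑ i, U i ((∑ j, (q i j) ^ 2) / 2)))
    (B : Matrix (Fin d) (Fin d) ℝ) (hB : B.trace = 0)
    (φ : (Fin K → Fin d → ℝ) → ℝ) (hφ : ContDiff ℝ 1 φ)
    (hφsupp : HasCompactSupport φ) :
    (∫ q : Fin K → Fin d → ℝ,
        M q * ∑ i, fderiv ℝ φ q (Pi.single i (B.mulVec (q i)))) =
      ∫ q : Fin K → Fin d → ℝ,
        M q * φ q *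
          ∑ i, deriv (U i) ((∑ j, (q i j) ^ 2) / 2) *
            ∑ j, q i j * B.mulVec (q i) j := by
  obtain rfl : M = maxwellian U := funext hM
  let A := LinearMap.piMap fun _ : Fin K => Matrix.toLin' B
  have hA : LinearMap.trace ℝ _ A = 0 := by simp [A, LinearMap.trace_piMap, hB]
  have hAq (q : Fin K → Fin d → ℝ) : ∑ i, Pi.single i (B.mulVec (q i)) = A q :=
    Finset.univ_sum_single _
  have hIBP := integral_mul_fderiv_apply_linear_eq_neg (μ := volume) hA (contDiff_maxwellian hU)
    hφ hφsupp
  simp only [← map_sum, hAq, hIBP, ← integral_neg,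
    fderiv_maxwellian_apply fun i => (hU i).differentiable one_ne_zero]
  congr with q
  simp only [A, LinearMap.coe_piMap, Pi.map_apply, Matrix.toLin'_apply, neg_mul, neg_neg]
  ring

/-- Integration-by-parts formula for trace-free drift terms.  With
`M(q) = exp(-∑ᵢ Uᵢ(|qᵢ|²/2))` the Maxwellian built from `C¹` spring potentials `Uᵢ`,
a trace-free matrix `B`, and a compactly supported `C¹` test function `φ` on
`(ℝ^d)^K`, one has
`∫ M(q) ∑ᵢ ⟨B qᵢ, ∇_{qᵢ} φ(q)⟩ dq = ∫ M(q) φ(q) ∑ᵢ Uᵢ'(|qᵢ|²/2) ⟨qᵢ, B qᵢ⟩ dq`.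
Here `⟨B qᵢ, ∇_{qᵢ} φ(q)⟩` is expressed as the derivative of `φ` at `q` in the
direction of the vector which equals `B qᵢ` in the `i`-th block and `0` elsewhere. -/
theorem maxwellian_integration_by_parts (d K : ℕ) (hd : 1 ≤ d) (hK : 1 ≤ K)
    (U : Fin K → ℝ → ℝ) (hU : ∀ i, ContDiff ℝ 1 (U i))
    (M : (Fin K → Fin d → ℝ) → ℝ)
    (hM : ∀ q : Fin K → Fin d → ℝ,
      M q = Real.exp (-∑ i, U i ((∑ j, (q i j) ^ 2) / 2)))
    (B : Matrix (Fin d) (Fin d) ℝ) (hB : B.trace = 0)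
    (φ : (Fin K → Fin d → ℝ) → ℝ) (hφ : ContDiff ℝ 1 φ)
    (hφsupp : HasCompactSupport φ) :
    (∫ q : Fin K → Fin d → ℝ,
        M q * ∑ i, fderiv ℝ φ q (Pi.single i (B.mulVec (q i)))) =
      ∫ q : Fin K → Fin d → ℝ,
        M q * φ q *
          ∑ i, deriv (U i) ((∑ j, (q i j) ^ 2) / 2) *
            ∑ j, q i j * B.mulVec (q i) j :=
  maxwellian_integration_by_parts_general d K U hU M hM B hB φ hφ hφsupp
end

section
/- Let δ ∈ (0,1) and L > 1, and define F^L_δ : ℝ → ℝ by F^L_δ(s) = (s² − δ²)/(2δ) + s(log δ − 1) + 1 for s ≤ δ; F^L_δ(s) = s(log s − 1) + 1 for δ ≤ s ≤ L; and F^L_δ(s) = (s² − L²)/(2L) + s(log L − 1) + 1 for s ≥ L. Then for every s ∈ ℝ and every κ ∈ (0,1], F^L_δ(κ·s) ≤ F^L_δ(s) + 1. -/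
/-!
`F^L_δ` is decreasing on `(-∞, 1]` and increasing on `[1, ∞)`, with `F^L_δ(1) = 0` and
`F^L_δ(0) = 1 - δ/2 ≤ 1`. Shrinking `s` towards `0` by `κ` therefore lowers the value, unless it
crosses into `(0, 1]`, where the value is at most `F^L_δ(0) ≤ 1 ≤ F^L_δ(s) + 1`.
-/

open Real Set

lemma apply_mul_le_add_sub_of_antitoneOn_of_monotoneOn {F : ℝ → ℝ} {m : ℝ} (hm : 0 ≤ m)
    (hanti : AntitoneOn F (Iic m)) (hmono : MonotoneOn F (Ici m)) (s : ℝ) {κ : ℝ}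
    (hκ0 : 0 ≤ κ) (hκ1 : κ ≤ 1) :
    F (κ * s) ≤ F s + (F 0 - F m) := by
  have hmin : ∀ x, F m ≤ F x := fun x ↦ (le_total x m).elim
    (fun hx ↦ hanti hx self_mem_Iic hx) (fun hx ↦ hmono self_mem_Ici hx hx)
  have hm0 : F m ≤ F 0 := hmin 0
  rcases le_or_gt s 0 with hs | hs
  · have : F (κ * s) ≤ F s :=
      hanti (hs.trans hm) (by nlinarith : κ * s ≤ m) (by nlinarith : s ≤ κ * s)
    linarith
  rcases le_or_gt (κ * s) m with hκs | hκs
  · have : F (κ * s) ≤ F 0 := hanti hm hκs (by positivity)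
    linarith [hmin s]
  · have : F (κ * s) ≤ F s := hmono hκs.le (hκs.le.trans (by nlinarith)) (by nlinarith)
    linarith

noncomputable def entropy (s : ℝ) : ℝ := s * (log s - 1) + 1

/-- The second-order Taylor polynomial of `entropy` at `c`:
`entropy c + log c * (s - c) + (s - c) ^ 2 / (2 * c)`. -/
noncomputable def entropyTaylor (c s : ℝ) : ℝ := (s ^ 2 - c ^ 2) / (2 * c) + s * (log c - 1) + 1

noncomputable def regEntropy (δ L s : ℝ) : ℝ :=
  if s ≤ δ then entropyTaylor δ s else if s ≤ L then entropy s else entropyTaylor L s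

lemma entropy_one : entropy 1 = 0 := by simp [entropy]

lemma entropy_eq_mul_log : entropy = fun s ↦ s * log s - s + 1 := by
  funext s; simp only [entropy]; ring

lemma continuous_entropy : Continuous entropy := by
  rw [entropy_eq_mul_log]
  fun_prop (disch := exact continuous_mul_log)

lemma hasDerivAt_entropy {x : ℝ} (hx : x ≠ 0) : HasDerivAt entropy (log x) x := by
  have h := ((hasDerivAt_mul_log hx).sub (hasDerivAt_id' x)).add_const 1
  rw [entropy_eq_mul_log, show log x = log x + 1 - 1 by ring]
  exact h

lemma entropy_antitoneOn : AntitoneOn entropy (Icc 0 1) := by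
  refine antitoneOn_of_deriv_nonpos (convex_Icc 0 1) continuous_entropy.continuousOn
    (fun x hx ↦ ?_) (fun x hx ↦ ?_) <;> rw [interior_Icc] at hx
  · exact (hasDerivAt_entropy hx.1.ne').differentiableAt.differentiableWithinAt
  · rw [(hasDerivAt_entropy hx.1.ne').deriv]
    exact log_nonpos hx.1.le hx.2.le

lemma entropy_monotoneOn : MonotoneOn entropy (Ici 1) := by
  refine monotoneOn_of_deriv_nonneg (convex_Ici 1) continuous_entropy.continuousOn
    (fun x hx ↦ ?_) (fun x hx ↦ ?_) <;> rw [interior_Ici] at hx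
  · exact (hasDerivAt_entropy (zero_lt_one.trans hx).ne').differentiableAt.differentiableWithinAt
  · rw [(hasDerivAt_entropy (zero_lt_one.trans hx).ne').deriv]
    exact log_nonneg (le_of_lt hx)

lemma entropyTaylor_self (c : ℝ) : entropyTaylor c c = entropy c := by
  simp [entropyTaylor, entropy]

lemma entropyTaylor_sub_entropyTaylor {c : ℝ} (hc : c ≠ 0) (x y : ℝ) :
    entropyTaylor c y - entropyTaylor c x = (y - x) * ((x + y) / (2 * c) + log c - 1) := by
  simp only [entropyTaylor]
  field_simp
  ring

lemma entropyTaylor_antitoneOn {c : ℝ} (hc0 : 0 < c) (hc1 : c ≤ 1) :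
    AntitoneOn (entropyTaylor c) (Iic c) := by
  intro x hx y hy hxy
  have hslope : (x + y) / (2 * c) ≤ 1 := (div_le_one (by positivity)).2 (by linarith [mem_Iic.1 hy])
  have := entropyTaylor_sub_entropyTaylor hc0.ne' x y
  linarith [mul_nonpos_of_nonneg_of_nonpos (sub_nonneg.2 hxy)
    (by linarith [log_nonpos hc0.le hc1] : (x + y) / (2 * c) + log c - 1 ≤ 0)]

lemma entropyTaylor_monotoneOn {c : ℝ} (hc : 1 ≤ c) : MonotoneOn (entropyTaylor c) (Ici c) := by
  intro x hx y hy hxy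
  have hc0 : 0 < c := zero_lt_one.trans_le hc
  have hslope : 1 ≤ (x + y) / (2 * c) := (one_le_div (by positivity)).2 (by linarith [mem_Ici.1 hx, mem_Ici.1 hy])
  have := entropyTaylor_sub_entropyTaylor hc0.ne' x y
  linarith [mul_nonneg (sub_nonneg.2 hxy)
    (by linarith [log_nonneg hc] : 0 ≤ (x + y) / (2 * c) + log c - 1)]

section regEntropy

variable {δ L : ℝ}

lemma regEntropy_eqOn_Iic : EqOn (regEntropy δ L) (entropyTaylor δ) (Iic δ) :=
  fun _ hs ↦ if_pos hs

lemma regEntropy_eqOn_Icc : EqOn (regEntropy δ L) entropy (Icc δ L) := by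
  intro s ⟨hδs, hsL⟩
  rcases hδs.eq_or_lt with rfl | hδs
  · simp [regEntropy, entropyTaylor_self]
  · simp [regEntropy, not_le.2 hδs, hsL]

lemma regEntropy_eqOn_Ici (hδL : δ < L) : EqOn (regEntropy δ L) (entropyTaylor L) (Ici L) := by
  intro s hLs
  rcases (mem_Ici.1 hLs).eq_or_lt with rfl | hLs
  · simp [regEntropy, not_le.2 hδL, entropyTaylor_self]
  · simp [regEntropy, not_le.2 (hδL.trans hLs), not_le.2 hLs]

lemma regEntropy_antitoneOn (hδ0 : 0 < δ) (hδ1 : δ ≤ 1) (hL : 1 ≤ L) :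
    AntitoneOn (regEntropy δ L) (Iic 1) := by
  rw [← Iic_union_Icc_eq_Iic hδ1]
  refine AntitoneOn.union_right ?_ ?_ isGreatest_Iic (isLeast_Icc hδ1)
  · exact (entropyTaylor_antitoneOn hδ0 hδ1).congr regEntropy_eqOn_Iic.symm
  · exact (entropy_antitoneOn.mono (Icc_subset_Icc hδ0.le le_rfl)).congr
      (regEntropy_eqOn_Icc.mono (Icc_subset_Icc le_rfl hL)).symm

lemma regEntropy_monotoneOn (hδ1 : δ ≤ 1) (hL : 1 < L) :
    MonotoneOn (regEntropy δ L) (Ici 1) := by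
  rw [← Icc_union_Ici_eq_Ici hL.le]
  refine MonotoneOn.union_right ?_ ?_ (isGreatest_Icc hL.le) isLeast_Ici
  · exact (entropy_monotoneOn.mono Icc_subset_Ici_self).congr
      (regEntropy_eqOn_Icc.mono (Icc_subset_Icc hδ1 le_rfl)).symm
  · exact (entropyTaylor_monotoneOn hL.le).congr (regEntropy_eqOn_Ici (hδ1.trans_lt hL)).symm

lemma regEntropy_one (hδ1 : δ ≤ 1) (hL : 1 ≤ L) : regEntropy δ L 1 = 0 := by
  rw [regEntropy_eqOn_Icc ⟨hδ1, hL⟩, entropy_one]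

lemma regEntropy_zero_le_one (hδ0 : 0 < δ) : regEntropy δ L 0 ≤ 1 := by
  rw [regEntropy_eqOn_Iic hδ0.le, entropyTaylor]
  have : (0 ^ 2 - δ ^ 2) / (2 * δ) ≤ 0 := div_nonpos_of_nonpos_of_nonneg (by nlinarith) (by positivity)
  linarith

end regEntropy

/-- For `δ ∈ (0,1)` and `L > 1`, the convex regularization `F^L_δ` of the entropy
function (quadratic below `δ`, equal to `s (log s - 1) + 1` on `[δ, L]`, and quadratic
above `L`) satisfies `F^L_δ(κ s) ≤ F^L_δ(s) + 1` for every `s ∈ ℝ` and `κ ∈ (0, 1]`. -/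
theorem regularized_entropy_scaling (δ L : ℝ) (hδ0 : 0 < δ) (hδ1 : δ < 1) (hL : 1 < L)
    (F : ℝ → ℝ)
    (hF : ∀ s : ℝ, F s =
      if s ≤ δ then (s ^ 2 - δ ^ 2) / (2 * δ) + s * (Real.log δ - 1) + 1
      else if s ≤ L then s * (Real.log s - 1) + 1
      else (s ^ 2 - L ^ 2) / (2 * L) + s * (Real.log L - 1) + 1)
    (s κ : ℝ) (hκ0 : 0 < κ) (hκ1 : κ ≤ 1) :
    F (κ * s) ≤ F s + 1 := by
  obtain rfl : F = regEntropy δ L := funext hF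
  have h := apply_mul_le_add_sub_of_antitoneOn_of_monotoneOn zero_le_one
    (regEntropy_antitoneOn hδ0 hδ1.le hL.le) (regEntropy_monotoneOn hδ1.le hL) s hκ0.le hκ1
  rw [regEntropy_one hδ1.le hL.le] at h
  linarith [regEntropy_zero_le_one (L := L) hδ0]
end

section
/- Let ϑ > 1 and c > 0. Then lim_{r→∞} ∫_{(0,1]} ( sup_{x ≥ r−1} e^{−c t x^{2ϑ−1}} (1 + x + t)^ϑ ) dt = 0; that is, for every ε > 0 there exists R ≥ 2 such that for all r ≥ R the (extended-real-valued) integral ∫_{(0,1]} sup_{x ≥ r−1} e^{−c t x^{2ϑ−1}} (1 + x + t)^ϑ dt is less than ε. -/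
/-!
Write `p = 2ϑ - 1` and `α = ϑ / p`, so that `α < 1` exactly because `ϑ > 1`. For `t ∈ (0,1]` and
`x ≥ r - 1 ≥ 1` we have `(1 + x + t)^ϑ ≤ 3^ϑ (x^p)^α`. Splitting `e^{-c t x^p}` into two halves,
one half absorbs `(x^p)^α` at the cost of `(c t / 2)^{-α}` and the other is at most
`e^{-(c/2) (r-1)^p t}`. The integrand is therefore bounded by a constant times
`t^{-α} e^{-(c/2) (r-1)^p t}`, which is dominated by the integrable `t^{-α}` and tends to `0`
pointwise, so dominated convergence finishes the proof.
-/

open MeasureTheory Filter Real Set Topology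
open scoped ENNReal

namespace Real

theorem rpow_le_exp_of_le_one {z α : ℝ} (hz : 0 ≤ z) (hα₀ : 0 ≤ α) (hα₁ : α ≤ 1) :
    z ^ α ≤ exp z := by
  refine le_trans ?_ (add_one_le_exp z)
  rcases le_total z 1 with h | h
  · linarith [rpow_le_one hz h hα₀]
  · linarith [rpow_le_self_of_one_le h hα₁]

theorem rpow_mul_exp_neg_mul_le {s y α : ℝ} (hs : 0 < s) (hy : 0 ≤ y) (hα₀ : 0 ≤ α)
    (hα₁ : α ≤ 1) : y ^ α * exp (-(s * y)) ≤ s ^ (-α) := by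
  calc y ^ α * exp (-(s * y)) = s ^ (-α) * ((s * y) ^ α * exp (-(s * y))) := by
        rw [mul_rpow hs.le hy, rpow_neg hs.le]
        field_simp
    _ ≤ s ^ (-α) * (exp (s * y) * exp (-(s * y))) := by
        gcongr
        exact rpow_le_exp_of_le_one (by positivity) hα₀ hα₁
    _ = s ^ (-α) := by rw [← exp_add, add_neg_cancel, exp_zero, mul_one]

end Real

theorem exp_neg_mul_rpow_mul_rpow_le {ϑ p c t a x : ℝ} (hp : 0 < p) (hϑ₀ : 0 ≤ ϑ)
    (hϑp : ϑ ≤ p) (hc : 0 < c) (ht : t ∈ Ioc 0 1) (ha : 1 ≤ a) (hax : a ≤ x) :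
    exp (-(c * t * x ^ p)) * (1 + x + t) ^ ϑ ≤
      3 ^ ϑ * (c / 2) ^ (-(ϑ / p)) * (t ^ (-(ϑ / p)) * exp (-(c / 2 * a ^ p * t))) := by
  obtain ⟨ht₀, ht₁⟩ := ht
  have hx : 0 ≤ x := by linarith
  set y := x ^ p
  have hy : 0 ≤ y := by positivity
  have hxy : x ^ ϑ = y ^ (ϑ / p) := by
    rw [← rpow_mul hx, mul_div_cancel₀ _ hp.ne']
  have hsplit : exp (-(c * t * y)) = exp (-(c / 2 * t * y)) * exp (-(c / 2 * t * y)) := by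
    rw [← exp_add]; ring_nf
  have hpow : y ^ (ϑ / p) * exp (-(c / 2 * t * y)) ≤ (c / 2) ^ (-(ϑ / p)) * t ^ (-(ϑ / p)) := by
    rw [← mul_rpow (by positivity) ht₀.le]
    exact rpow_mul_exp_neg_mul_le (by positivity) hy (by positivity)
      (div_le_one_of_le₀ hϑp hp.le)
  have hdecay : exp (-(c / 2 * t * y)) ≤ exp (-(c / 2 * a ^ p * t)) := by
    have : c / 2 * a ^ p * t ≤ c / 2 * y * t := by
      gcongr; exact rpow_le_rpow (by linarith) hax hp.le
    rw [exp_le_exp]; linarith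
  calc exp (-(c * t * y)) * (1 + x + t) ^ ϑ ≤ exp (-(c * t * y)) * (3 * x) ^ ϑ := by
        gcongr; linarith
    _ = 3 ^ ϑ * (y ^ (ϑ / p) * exp (-(c / 2 * t * y))) * exp (-(c / 2 * t * y)) := by
        rw [mul_rpow (by norm_num) hx, hxy, hsplit]; ring
    _ ≤ 3 ^ ϑ * ((c / 2) ^ (-(ϑ / p)) * t ^ (-(ϑ / p))) * exp (-(c / 2 * a ^ p * t)) := by
        gcongr
    _ = _ := by ring

theorem tendsto_setLIntegral_rpow_mul_exp_neg_mul {α : ℝ} (hα : α < 1) :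
    Tendsto (fun s : ℝ => ∫⁻ t in Ioc 0 1, ENNReal.ofReal (t ^ (-α) * exp (-(s * t))))
      atTop (𝓝 0) := by
  have hint : IntegrableOn (fun t : ℝ => t ^ (-α)) (Ioc 0 1) := by
    rw [← intervalIntegrable_iff_integrableOn_Ioc_of_le zero_le_one]
    exact intervalIntegral.intervalIntegrable_rpow' (by linarith)
  rw [← lintegral_zero]
  refine tendsto_lintegral_filter_of_dominated_convergence (fun t => ENNReal.ofReal (t ^ (-α)))
    (.of_forall fun s => by fun_prop) ?_ hint.lintegral_lt_top.ne ?_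
  · filter_upwards [eventually_ge_atTop 0] with s hs
    refine (ae_restrict_iff' measurableSet_Ioc).2 (.of_forall fun t ht => ?_)
    refine ENNReal.ofReal_le_ofReal (mul_le_of_le_one_right (rpow_nonneg ht.1.le _) ?_)
    exact exp_le_one_iff.2 (by nlinarith [ht.1])
  · refine (ae_restrict_iff' measurableSet_Ioc).2 (.of_forall fun t ht => ?_)
    rw [← ENNReal.ofReal_zero, ← mul_zero (t ^ (-α))]
    refine ENNReal.tendsto_ofReal (tendsto_exp_neg_atTop_nhds_zero.comp ?_ |>.const_mul _)
    exact tendsto_id.atTop_mul_const ht.1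

/-- The key analytic estimate of Appendix B of the paper: for `ϑ > 1` and `c > 0`,
`∫_{(0,1]} ( sup_{x ≥ r-1} e^{-c t x^{2ϑ-1}} (1 + x + t)^ϑ ) dt → 0` as `r → ∞`;
that is, for every `ε > 0` there exists `R ≥ 2` such that for all `r ≥ R` the
extended-real-valued integral is `< ε`. -/
theorem tail_factor_tendsto_zero (ϑ c : ℝ) (hϑ : 1 < ϑ) (hc : 0 < c) :
    ∀ ε : ℝ, 0 < ε → ∃ R : ℝ, 2 ≤ R ∧ ∀ r : ℝ, R ≤ r →
      (∫⁻ t in Set.Ioc (0 : ℝ) 1,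
          ⨆ (x : ℝ) (_ : r - 1 ≤ x),
            ENNReal.ofReal (Real.exp (-(c * t * x ^ (2 * ϑ - 1))) * (1 + x + t) ^ ϑ)) <
        ENNReal.ofReal ε := by
  set p := 2 * ϑ - 1
  set K := ENNReal.ofReal (3 ^ ϑ * (c / 2) ^ (-(ϑ / p)))
  have hp : 0 < p := by linarith
  have hbound : ∀ r : ℝ, 2 ≤ r →
      (∫⁻ t in Ioc (0 : ℝ) 1, ⨆ (x : ℝ) (_ : r - 1 ≤ x),
        ENNReal.ofReal (exp (-(c * t * x ^ p)) * (1 + x + t) ^ ϑ)) ≤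
      K * ∫⁻ t in Ioc 0 1, ENNReal.ofReal (t ^ (-(ϑ / p)) * exp (-(c / 2 * (r - 1) ^ p * t))) := by
    intro r hr
    rw [← lintegral_const_mul' _ _ ENNReal.ofReal_ne_top]
    refine setLIntegral_mono' measurableSet_Ioc fun t ht => iSup₂_le fun x hx => ?_
    rw [← ENNReal.ofReal_mul (by positivity)]
    exact ENNReal.ofReal_le_ofReal
      (exp_neg_mul_rpow_mul_rpow_le hp (by linarith) (by linarith) hc ht (by linarith) hx)
  have hscale : Tendsto (fun r : ℝ => c / 2 * (r - 1) ^ p) atTop atTop :=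
    ((tendsto_rpow_atTop hp).comp (tendsto_atTop_add_const_right _ (-1) tendsto_id))
      |>.const_mul_atTop (by positivity)
  have hα : ϑ / p < 1 := (div_lt_one hp).2 (by linarith)
  have hlim := ENNReal.Tendsto.const_mul (a := K)
    ((tendsto_setLIntegral_rpow_mul_exp_neg_mul hα).comp hscale) (.inr ENNReal.ofReal_ne_top)
  rw [mul_zero] at hlim
  have htail := tendsto_of_tendsto_of_tendsto_of_le_of_le' tendsto_const_nhds hlim
    (.of_forall fun _ => zero_le) ((eventually_ge_atTop 2).mono hbound)
  intro ε hε
  obtain ⟨R, hR⟩ := eventually_atTop.1 (htail.eventually_lt_const (ENNReal.ofReal_pos.2 hε))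
  exact ⟨max 2 R, le_max_left _ _, fun r hr => hR r (le_of_max_le_right hr)⟩
end
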